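/- For every finite-communication algorithm of class 𝓛 (with arbitrarily many colors), Rendezvous is unsolvable in ASynch: there exist distinct initial positions and a legal fair asynchronous execution under which the two robots, both with light initially set to c₀, never occupy the same point, so rendezvous is never solved. -/

import Mathlib

/-- Points in the plane. -/
abbrev Pt := EuclideanSpace ℝ (Fin 2)

/-- The raw data of an asynchronous execution of two finite-communication
robots with light colors in `C` (robot `r` is `false`, robot `s` is `true`):
for each robot `i` and each cycle `k`, the instantaneous Look time
`look i k`, the end time `compEnd i k` of the Compute phase (at which the
robot's light is instantaneously set), and the end time `moveEnd i k` of the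
Move phase; together with the trajectories `pos` and light histories `light`
of the two robots over global time. -/
structure AsyncExec (C : Type*) where
  look : Bool → ℕ → ℝ
  compEnd : Bool → ℕ → ℝ
  moveEnd : Bool → ℕ → ℝ
  pos : Bool → ℝ → Pt
  light : Bool → ℝ → C

namespace AsyncExec

variable {C : Type*}

/-- Own position recorded by robot `i` at its `k`-th Look. -/
noncomputable def myPos (E : AsyncExec C) (i : Bool) (k : ℕ) : Pt := E.pos i (E.look i k)

/-- The other robot's position recorded by robot `i` at its `k`-th Look. -/
noncomputable def obsPos (E : AsyncExec C) (i : Bool) (k : ℕ) : Pt := E.pos (!i) (E.look i k)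

/-- The other robot's light color recorded by robot `i` at its `k`-th Look. -/
noncomputable def obsCol (E : AsyncExec C) (i : Bool) (k : ℕ) : C := E.light (!i) (E.look i k)

/-- `E` is a legal asynchronous execution of the algorithm that, for robot `i`
at own position `p`, with recorded snapshot (other robot at `q` with color
`c`), prescribes the new color `algoCol i p q c` and destination
`algoDest i p q c`; with both lights initially `c0` and initial positions
`init`; `reach start dest endpt` is the constraint on the point `endpt` where
a Move from `start` toward `dest` is allowed to end (rigid or non-rigid). -/
structure IsLegal (algoCol : Bool → Pt → Pt → C → C) (algoDest : Bool → Pt → Pt → C → Pt)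
    (c0 : Bool → C) (init : Bool → Pt) (reach : Pt → Pt → Pt → Prop)
    (E : AsyncExec C) : Prop where
  /-- Look ≤ end of Compute ≤ end of Move < next Look. -/
  look_le_comp : ∀ i k, E.look i k ≤ E.compEnd i k
  comp_le_move : ∀ i k, E.compEnd i k ≤ E.moveEnd i k
  move_lt_look : ∀ i k, E.moveEnd i k < E.look i (k + 1)
  /-- Each robot performs infinitely many cycles, all of finite duration. -/
  look_tendsto : ∀ i, Filter.Tendsto (E.look i) Filter.atTop Filter.atTop
  /-- Before finishing its first Compute, a robot is at its initial position. -/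
  init_pos : ∀ i t, t ≤ E.compEnd i 0 → E.pos i t = init i
  /-- Before finishing its first Compute, a robot's light shows the initial color. -/
  init_light : ∀ i t, t < E.compEnd i 0 → E.light i t = c0 i
  /-- From the end of the Compute of cycle `k` until the end of the Compute of
  cycle `k+1`, the light shows the color computed from the snapshot of cycle `k`. -/
  light_set : ∀ i k t, E.compEnd i k ≤ t → t < E.compEnd i (k + 1) →
    E.light i t = algoCol i (E.myPos i k) (E.obsPos i k) (E.obsCol i k)
  /-- During the Move of cycle `k` the robot travels monotonically along the
  straight segment from its position toward the destination computed from the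
  snapshot of cycle `k`, and the endpoint of the Move satisfies `reach`. -/
  move : ∀ i k, ∃ f : ℝ → ℝ,
    MonotoneOn f (Set.Icc (E.compEnd i k) (E.moveEnd i k)) ∧
    f (E.compEnd i k) = 0 ∧
    (∀ t ∈ Set.Icc (E.compEnd i k) (E.moveEnd i k), 0 ≤ f t ∧ f t ≤ 1) ∧
    (∀ t ∈ Set.Icc (E.compEnd i k) (E.moveEnd i k),
      E.pos i t = E.myPos i k +
        f t • (algoDest i (E.myPos i k) (E.obsPos i k) (E.obsCol i k) - E.myPos i k)) ∧
    reach (E.myPos i k) (algoDest i (E.myPos i k) (E.obsPos i k) (E.obsCol i k))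
      (E.pos i (E.moveEnd i k))
  /-- A robot does not move between the end of a Move and the end of the
  Compute of its next cycle (in particular its position at the next Look is
  where its previous Move ended). -/
  still : ∀ i k t, E.moveEnd i k ≤ t → t ≤ E.compEnd i (k + 1) →
    E.pos i t = E.pos i (E.moveEnd i k)

end AsyncExec

/-- Rigid movements: every Move ends exactly at the computed destination. -/
def RigidReach : Pt → Pt → Pt → Prop := fun _ dest endpt => endpt = dest

/-- Non-rigid movements with parameter `δ`: every Move either ends at the
computed destination or covers a distance of at least `δ`. -/
def NonRigidReach (δ : ℝ) : Pt → Pt → Pt → Prop :=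
  fun start dest endpt => endpt = dest ∨ δ ≤ ‖endpt - start‖

/-- Rendezvous is solved: there is a time after which both robots occupy the
same point and never move again. -/
def SolvesAsync {C : Type*} (E : AsyncExec C) : Prop :=
  ∃ T : ℝ, ∀ t, T ≤ t →
    E.pos false t = E.pos false T ∧ E.pos true t = E.pos false T

/-!
The adversary keeps the two robots on a common line and runs in rounds, during which both lights
show the same color `c` and both robots look at the same configuration. If `λ(c) ≠ 1/2`, both
robots jump simultaneously, which multiplies the vector between them by `1 - 2λ(c) ≠ 0`. If
`λ(c) = 1/2`, simultaneous jumps would meet in the midpoint, so `r` is activated twice while `s`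
is still waiting on its old snapshot: `r` jumps to the midpoint, looks again (still seeing the
color `c`, since `s` has not yet changed its light) and covers half the remaining distance, while
`s` jumps to the midpoint; the vector between them is then multiplied by `-1/4`. In both cases
both lights show `next c` at the start of the next round, and no jump ever lands on the other
robot. Moves are instantaneous jumps at the end of the Move phase, which is a legal (monotone)
traversal of the segment.
-/

open Filter AffineMap

theorem add_smul_sub_eq_lineMap {E : Type*} [AddCommGroup E] [Module ℝ E] (x y : E) (c : ℝ) :
    x + c • (y - x) = lineMap x y c := by
  rw [lineMap_apply_module', add_comm]

theorem exists_segment_param_of_jump {a b : ℝ} (hab : a < b) {p d : Pt} {x : ℝ → Pt}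
    (hx : ∀ t ∈ Set.Ico a b, x t = p) (hb : x b = d) :
    ∃ f : ℝ → ℝ, MonotoneOn f (Set.Icc a b) ∧ f a = 0 ∧
      (∀ t ∈ Set.Icc a b, 0 ≤ f t ∧ f t ≤ 1) ∧
      ∀ t ∈ Set.Icc a b, x t = p + f t • (d - p) := by
  refine ⟨fun t => if b ≤ t then 1 else 0, fun s _ t _ hst => ?_, if_neg hab.not_ge,
    fun t _ => by dsimp only; split_ifs <;> norm_num, fun t ht => ?_⟩
  · by_cases hs : b ≤ s
    · simp [hs, hs.trans hst]
    · simp only [hs, if_false]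
      split_ifs <;> norm_num
  · rcases ht.2.lt_or_eq with htb | rfl
    · simp [htb.not_ge, hx t ⟨ht.1, htb⟩]
    · simp [hb]

/-- For monotone `τ`: the value `v 0` before `τ 0` and `v (k + 1)` on `[τ k, τ (k + 1))`. -/
noncomputable def stepFn {α : Type*} (τ : ℕ → ℝ) (v : ℕ → α) (t : ℝ) : α :=
  v (sInf {k | t < τ k})

theorem stepFn_eq {α : Type*} {τ : ℕ → ℝ} {v : ℕ → α} {t : ℝ} {k : ℕ}
    (hle : ∀ i < k, τ i ≤ t) (hlt : t < τ k) : stepFn τ v t = v k := by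
  refine congrArg v (le_antisymm (Nat.sInf_le hlt) (le_csInf ⟨k, hlt⟩ fun i hi => ?_))
  by_contra! h
  exact (hle i h).not_gt hi

theorem exists_stepFn_eq {α : Type*} {τ : ℕ → ℝ} (v : ℕ → α) (hτ : Tendsto τ atTop atTop)
    (t : ℝ) : ∃ k, (∀ i < k, τ i ≤ t) ∧ t < τ k ∧ stepFn τ v t = v k :=
  ⟨_, fun _ hi => not_lt.1 (Nat.notMem_of_lt_sInf hi),
    Nat.sInf_mem (hτ.eventually_gt_atTop t).exists, rfl⟩

/-- The cycles of one robot whose Moves are instantaneous jumps: cycle `k` looks at time `look k`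
from `pos k`, switches its light from `col k` to `col (k + 1)` at time `comp k`, and jumps to
`pos (k + 1)` at time `move k`. -/
structure JumpRun (C : Type*) where
  look : ℕ → ℝ
  comp : ℕ → ℝ
  move : ℕ → ℝ
  pos : ℕ → Pt
  col : ℕ → C
  look_le_comp : ∀ k, look k ≤ comp k
  comp_lt_move : ∀ k, comp k < move k
  move_lt_look : ∀ k, move k < look (k + 1)
  tendsto_look : Tendsto look atTop atTop

namespace JumpRun

variable {C : Type*} (R : JumpRun C)

noncomputable def posAt : ℝ → Pt := stepFn R.move R.pos

noncomputable def colAt : ℝ → C := stepFn R.comp R.col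

theorem look_mono : Monotone R.look := monotone_nat_of_le_succ fun k =>
  ((R.look_le_comp k).trans (R.comp_lt_move k).le).trans (R.move_lt_look k).le

theorem move_le_look {i k : ℕ} (h : i < k) : R.move i ≤ R.look k :=
  (R.move_lt_look i).le.trans (R.look_mono h)

theorem move_mono : Monotone R.move := monotone_nat_of_le_succ fun k =>
  (R.move_le_look k.lt_succ_self).trans ((R.look_le_comp _).trans (R.comp_lt_move _).le)

theorem comp_mono : Monotone R.comp := monotone_nat_of_le_succ fun k =>
  ((R.comp_lt_move k).le.trans (R.move_le_look k.lt_succ_self)).trans (R.look_le_comp _)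

variable {R} {k : ℕ} {t : ℝ}

theorem posAt_eq_pos_zero (h : t < R.move 0) : R.posAt t = R.pos 0 :=
  stepFn_eq (fun _ hi => absurd hi (Nat.not_lt_zero _)) h

theorem colAt_eq_col_zero (h : t < R.comp 0) : R.colAt t = R.col 0 :=
  stepFn_eq (fun _ hi => absurd hi (Nat.not_lt_zero _)) h

theorem posAt_eq_pos (h₁ : R.look k ≤ t) (h₂ : t < R.move k) : R.posAt t = R.pos k :=
  stepFn_eq (fun _ hi => (R.move_le_look hi).trans h₁) h₂

theorem posAt_eq_pos_succ (h₁ : R.move k ≤ t) (h₂ : t < R.move (k + 1)) :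
    R.posAt t = R.pos (k + 1) :=
  stepFn_eq (fun _ hi => (R.move_mono (Nat.lt_succ_iff.1 hi)).trans h₁) h₂

theorem colAt_eq_col (h₁ : R.look k ≤ t) (h₂ : t < R.comp k) : R.colAt t = R.col k :=
  stepFn_eq (fun i hi => ((R.comp_lt_move i).le.trans (R.move_le_look hi)).trans h₁) h₂

theorem colAt_eq_col_succ (h₁ : R.comp k ≤ t) (h₂ : t < R.comp (k + 1)) :
    R.colAt t = R.col (k + 1) :=
  stepFn_eq (fun _ hi => (R.comp_mono (Nat.lt_succ_iff.1 hi)).trans h₁) h₂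

theorem posAt_look : R.posAt (R.look k) = R.pos k :=
  posAt_eq_pos le_rfl ((R.look_le_comp k).trans_lt (R.comp_lt_move k))

theorem posAt_move : R.posAt (R.move k) = R.pos (k + 1) :=
  posAt_eq_pos_succ le_rfl ((R.move_le_look k.lt_succ_self).trans_lt
    ((R.look_le_comp _).trans_lt (R.comp_lt_move _)))

variable (R) in
theorem exists_posAt_eq (t : ℝ) :
    ∃ k, (∀ i < k, R.move i ≤ t) ∧ t < R.move k ∧ R.posAt t = R.pos k :=
  exists_stepFn_eq R.pos (tendsto_atTop_mono
    (fun k => (R.look_le_comp k).trans (R.comp_lt_move k).le) R.tendsto_look) t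

end JumpRun

namespace AsyncExec

variable {C : Type*} {R : Bool → JumpRun C}

noncomputable def ofJumpRuns (R : Bool → JumpRun C) : AsyncExec C where
  look i := (R i).look
  compEnd i := (R i).comp
  moveEnd i := (R i).move
  pos i := (R i).posAt
  light i := (R i).colAt

theorem myPos_ofJumpRuns (i : Bool) (k : ℕ) : (ofJumpRuns R).myPos i k = (R i).pos k :=
  JumpRun.posAt_look

theorem isLegal_ofJumpRuns {algoCol : Bool → Pt → Pt → C → C}
    {algoDest : Bool → Pt → Pt → C → Pt} {c0 : Bool → C} {init : Bool → Pt}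
    (pos_zero : ∀ i, (R i).pos 0 = init i) (col_zero : ∀ i, (R i).col 0 = c0 i)
    (col_succ : ∀ i k, (R i).col (k + 1) = algoCol i ((R i).pos k)
      ((R !i).posAt ((R i).look k)) ((R !i).colAt ((R i).look k)))
    (pos_succ : ∀ i k, (R i).pos (k + 1) = algoDest i ((R i).pos k)
      ((R !i).posAt ((R i).look k)) ((R !i).colAt ((R i).look k))) :
    (ofJumpRuns R).IsLegal algoCol algoDest c0 init RigidReach where
  look_le_comp i := (R i).look_le_comp
  comp_le_move i k := ((R i).comp_lt_move k).le
  move_lt_look i := (R i).move_lt_look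
  look_tendsto i := (R i).tendsto_look
  init_pos i _ ht :=
    (JumpRun.posAt_eq_pos_zero (ht.trans_lt ((R i).comp_lt_move 0))).trans (pos_zero i)
  init_light i _ ht := (JumpRun.colAt_eq_col_zero ht).trans (col_zero i)
  light_set i k _ h₁ h₂ := by
    rw [myPos_ofJumpRuns]
    exact (JumpRun.colAt_eq_col_succ h₁ h₂).trans (col_succ i k)
  move i k := by
    rw [myPos_ofJumpRuns]
    obtain ⟨f, hf⟩ := exists_segment_param_of_jump ((R i).comp_lt_move k)
      (fun t ht => JumpRun.posAt_eq_pos (((R i).look_le_comp k).trans ht.1) ht.2)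
      (JumpRun.posAt_move.trans (pos_succ i k))
    exact ⟨f, hf.1, hf.2.1, hf.2.2.1, hf.2.2.2, JumpRun.posAt_move.trans (pos_succ i k)⟩
  still i k _ h₁ h₂ :=
    (JumpRun.posAt_eq_pos_succ h₁ (h₂.trans_lt ((R i).comp_lt_move _))).trans
      JumpRun.posAt_move.symm

end AsyncExec

namespace ClassL

section Rounds

variable {V P : Type*} [AddCommGroup V] [Module ℝ V] [AddTorsor V P]

/-- The positions of `(r, s)` after a round with ratio `c` started at `xy`. -/
noncomputable def roundStep (c : ℝ) (xy : P × P) : P × P :=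
  (if c = 1 / 2 then lineMap (lineMap xy.1 xy.2 c) xy.2 c else lineMap xy.1 xy.2 c,
    lineMap xy.2 xy.1 c)

theorem roundStep_fst_ne_snd {xy : P × P} (h : xy.1 ≠ xy.2) (c : ℝ) :
    (roundStep c xy).1 ≠ (roundStep c xy).2 := by
  simp only [roundStep, ← lineMap_apply_one_sub xy.1 xy.2 c]
  split_ifs with hc
  · rw [lineMap_lineMap_left, Ne, lineMap_eq_lineMap_iff]
    subst hc
    norm_num [h]
  · rw [Ne, lineMap_eq_lineMap_iff]
    rintro (h' | h')
    · exact h h'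
    · exact hc (by linarith)

variable (μ : ℕ → ℝ)

noncomputable def roundPos (p q : P) : ℕ → P × P
  | 0 => (p, q)
  | j + 1 => roundStep (μ j) (roundPos p q j)

theorem roundPos_fst_ne_snd {p q : P} (h : p ≠ q) (j : ℕ) :
    (roundPos μ p q j).1 ≠ (roundPos μ p q j).2 := by
  induction j with
  | zero => exact h
  | succ j ih => exact roundStep_fst_ne_snd ih (μ j)

end Rounds

section Phases

variable (μ : ℕ → ℝ)

/-- The cycles of `r` are the phases `(j, false)`, and `(j, true)` when `μ j = 1 / 2`, of the
rounds `j`, in chronological order. -/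
noncomputable def nextPhase : ℕ × Bool → ℕ × Bool
  | (j, false) => if μ j = 1 / 2 then (j, true) else (j + 1, false)
  | (j, true) => (j + 1, false)

noncomputable def phase (k : ℕ) : ℕ × Bool := (nextPhase μ)^[k] (0, false)

theorem phase_succ (k : ℕ) : phase μ (k + 1) = nextPhase μ (phase μ k) :=
  Function.iterate_succ_apply' _ _ _

theorem nextPhase_snd : ∀ φ, (nextPhase μ φ).2 = true → μ (nextPhase μ φ).1 = 1 / 2
  | (j, false) => by simp only [nextPhase]; split_ifs <;> simp_all
  | (j, true) => by simp [nextPhase]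

theorem phase_snd {k : ℕ} (h : (phase μ k).2 = true) : μ (phase μ k).1 = 1 / 2 := by
  cases k with
  | zero => simp [phase] at h
  | succ k => rw [phase_succ] at h ⊢; exact nextPhase_snd μ _ h

theorem le_nextPhase_fst : ∀ φ, φ.1 ≤ (nextPhase μ φ).1
  | (j, false) => by simp only [nextPhase]; split_ifs <;> simp
  | (j, true) => by simp [nextPhase]

theorem exists_phase_eq (j : ℕ) : ∃ k, phase μ k = (j, false) := by
  induction j with
  | zero => exact ⟨0, rfl⟩
  | succ j ih =>
    obtain ⟨k, hk⟩ := ih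
    by_cases hj : μ j = 1 / 2
    · exact ⟨k + 2, by simp only [phase_succ, hk, nextPhase, if_pos hj]⟩
    · exact ⟨k + 1, by simp only [phase_succ, hk, nextPhase, if_neg hj]⟩

theorem tendsto_phase_fst : Tendsto (fun k => (phase μ k).1) atTop atTop :=
  tendsto_atTop_atTop_of_monotone
    (monotone_nat_of_le_succ fun k => (phase_succ μ k).symm ▸ le_nextPhase_fst μ _) fun j =>
    let ⟨k, hk⟩ := exists_phase_eq μ j
    ⟨k, by rw [hk]⟩

/- Round `j` takes place in `[6 j, 6 j + 6)`: `s` looks at `6 j`, sets its light at `6 j + 4` and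
jumps at `6 j + 5`; `r` looks at `6 j` and sets its light at `6 j + 1`, then, if `μ j = 1 / 2`,
jumps at `6 j + 2`, looks again at `6 j + 3`, sets its light at `6 j + 4` and jumps at `6 j + 5`,
and otherwise jumps at `6 j + 5` together with `s`. -/

def rLook : ℕ × Bool → ℝ
  | (j, false) => 6 * j
  | (j, true) => 6 * j + 3

noncomputable def rMove : ℕ × Bool → ℝ
  | (j, false) => if μ j = 1 / 2 then 6 * j + 2 else 6 * j + 5
  | (j, true) => 6 * j + 5

theorem rLook_mem_Icc : ∀ φ : ℕ × Bool, rLook φ ∈ Set.Icc (6 * (φ.1 : ℝ)) (6 * φ.1 + 3)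
  | (j, false) => by simp [rLook]
  | (j, true) => by simp [rLook]

theorem rLook_add_one_lt_rMove : ∀ φ, rLook φ + 1 < rMove μ φ
  | (j, false) => by simp only [rLook, rMove]; split_ifs <;> linarith
  | (j, true) => by simp only [rLook, rMove]; linarith

theorem rMove_lt_rLook_nextPhase : ∀ φ, rMove μ φ < rLook (nextPhase μ φ)
  | (j, false) => by
    simp only [rMove, nextPhase]; split_ifs <;> simp only [rLook] <;> push_cast <;> linarith
  | (j, true) => by simp only [rMove, nextPhase, rLook]; push_cast; linarith

theorem rMove_le : ∀ φ, rMove μ φ ≤ 6 * φ.1 + 5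
  | (j, false) => by simp only [rMove]; split_ifs <;> linarith
  | (j, true) => le_rfl

theorem le_rMove : ∀ φ, 6 * ((nextPhase μ φ).1 : ℝ) - 1 ≤ rMove μ φ
  | (j, false) => by simp only [rMove, nextPhase]; split_ifs <;> push_cast <;> linarith
  | (j, true) => by simp only [rMove, nextPhase]; push_cast; linarith

theorem six_mul_add_le_six_mul {i j : ℕ} (h : i < j) {a : ℝ} (ha : a ≤ 6) :
    6 * (i : ℝ) + a ≤ 6 * j := by
  have : (i : ℝ) + 1 ≤ j := by exact_mod_cast h
  linarith

end Phases

section Runs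

variable {C : Type*} (μ : ℕ → ℝ) (γ : ℕ → C) (p q : Pt)

noncomputable def rPos : ℕ × Bool → Pt
  | (j, false) => (roundPos μ p q j).1
  | (j, true) => lineMap (roundPos μ p q j).1 (roundPos μ p q j).2 (μ j)

def rCol : ℕ × Bool → C
  | (j, false) => γ j
  | (j, true) => γ (j + 1)

theorem rPos_nextPhase : ∀ φ : ℕ × Bool, (φ.2 = true → μ φ.1 = 1 / 2) →
    rPos μ p q (nextPhase μ φ) = lineMap (rPos μ p q φ) (roundPos μ p q φ.1).2 (μ φ.1)
  | (j, false), _ => by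
    by_cases hj : μ j = 1 / 2
    · simp only [nextPhase, if_pos hj, rPos]
    · simp only [nextPhase, if_neg hj, rPos, roundPos, roundStep]
  | (j, true), h => by simp only [nextPhase, rPos, roundPos, roundStep, if_pos (h rfl)]

theorem rCol_nextPhase : ∀ φ : ℕ × Bool, rCol γ (nextPhase μ φ) = γ (φ.1 + 1)
  | (j, false) => by simp only [nextPhase]; split_ifs <;> rfl
  | (j, true) => rfl

noncomputable def rRun : JumpRun C where
  look k := rLook (phase μ k)
  comp k := rLook (phase μ k) + 1
  move k := rMove μ (phase μ k)
  pos k := rPos μ p q (phase μ k)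
  col k := rCol γ (phase μ k)
  look_le_comp _ := by linarith
  comp_lt_move _ := rLook_add_one_lt_rMove μ _
  move_lt_look k := (phase_succ μ k).symm ▸ rMove_lt_rLook_nextPhase μ _
  tendsto_look := tendsto_atTop_mono (fun k => (rLook_mem_Icc (phase μ k)).1)
    ((tendsto_natCast_atTop_atTop.comp (tendsto_phase_fst μ)).const_mul_atTop (by norm_num))

noncomputable def sRun : JumpRun C where
  look j := 6 * j
  comp j := 6 * j + 4
  move j := 6 * j + 5
  pos j := (roundPos μ p q j).2
  col := γ
  look_le_comp _ := by linarith
  comp_lt_move _ := by linarith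
  move_lt_look _ := by push_cast; linarith
  tendsto_look := tendsto_natCast_atTop_atTop.const_mul_atTop (by norm_num)

theorem sRun_posAt_rRun_look (k : ℕ) :
    (sRun μ γ p q).posAt ((rRun μ γ p q).look k) = (roundPos μ p q (phase μ k).1).2 :=
  have h := rLook_mem_Icc (phase μ k)
  stepFn_eq (fun _ hi => (six_mul_add_le_six_mul hi (by norm_num)).trans h.1)
    (show rLook (phase μ k) < 6 * (phase μ k).1 + 5 by linarith [h.2])

theorem sRun_colAt_rRun_look (k : ℕ) :
    (sRun μ γ p q).colAt ((rRun μ γ p q).look k) = γ (phase μ k).1 :=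
  have h := rLook_mem_Icc (phase μ k)
  stepFn_eq (fun _ hi => (six_mul_add_le_six_mul hi (by norm_num)).trans h.1)
    (show rLook (phase μ k) < 6 * (phase μ k).1 + 4 by linarith [h.2])

theorem rRun_posAt_sRun_look (j : ℕ) :
    (rRun μ γ p q).posAt ((sRun μ γ p q).look j) = (roundPos μ p q j).1 := by
  obtain ⟨k, hk⟩ := exists_phase_eq μ j
  have h := rLook_add_one_lt_rMove μ (phase μ k)
  rw [hk] at h
  refine (JumpRun.posAt_eq_pos (k := k) ?_ ?_).trans ?_ <;>
    simp only [rRun, sRun, hk, rPos, rLook] at h ⊢ <;> linarith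

theorem rRun_colAt_sRun_look (j : ℕ) : (rRun μ γ p q).colAt ((sRun μ γ p q).look j) = γ j := by
  obtain ⟨k, hk⟩ := exists_phase_eq μ j
  refine (JumpRun.colAt_eq_col (k := k) ?_ ?_).trans ?_ <;>
    simp only [rRun, sRun, hk, rCol, rLook] <;> linarith

theorem rRun_col_succ {next : C → C} (hγ : ∀ j, γ (j + 1) = next (γ j)) (k : ℕ) :
    (rRun μ γ p q).col (k + 1) = next ((sRun μ γ p q).colAt ((rRun μ γ p q).look k)) := by
  rw [sRun_colAt_rRun_look, ← hγ]
  exact (congrArg (rCol γ) (phase_succ μ k)).trans (rCol_nextPhase μ γ _)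

theorem sRun_col_succ {next : C → C} (hγ : ∀ j, γ (j + 1) = next (γ j)) (j : ℕ) :
    (sRun μ γ p q).col (j + 1) = next ((rRun μ γ p q).colAt ((sRun μ γ p q).look j)) := by
  rw [rRun_colAt_sRun_look]
  exact hγ j

theorem rRun_pos_succ (k : ℕ) : (rRun μ γ p q).pos (k + 1) =
    lineMap ((rRun μ γ p q).pos k) ((sRun μ γ p q).posAt ((rRun μ γ p q).look k))
      (μ (phase μ k).1) := by
  rw [sRun_posAt_rRun_look]
  exact (congrArg (rPos μ p q) (phase_succ μ k)).trans (rPos_nextPhase μ p q _ (phase_snd μ))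

theorem sRun_pos_succ (j : ℕ) : (sRun μ γ p q).pos (j + 1) =
    lineMap ((sRun μ γ p q).pos j) ((rRun μ γ p q).posAt ((sRun μ γ p q).look j)) (μ j) := by
  rw [rRun_posAt_sRun_look]
  rfl

variable {p q} in
theorem rRun_posAt_ne_sRun_posAt (hpq : p ≠ q) (t : ℝ) :
    (rRun μ γ p q).posAt t ≠ (sRun μ γ p q).posAt t := by
  obtain ⟨k, hle, hlt, hr⟩ := (rRun μ γ p q).exists_posAt_eq t
  have hs : (sRun μ γ p q).posAt t = (roundPos μ p q (phase μ k).1).2 := by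
    refine stepFn_eq (fun i hi => ?_) (hlt.trans_le (rMove_le μ _))
    cases k with
    | zero => exact absurd hi (Nat.not_lt_zero _)
    | succ k =>
      rw [phase_succ] at hi
      have h₁ := six_mul_add_le_six_mul hi (a := 6) le_rfl
      have h₂ := le_rMove μ (phase μ k)
      have h₃ : rMove μ (phase μ k) ≤ t := hle k k.lt_succ_self
      show 6 * (i : ℝ) + 5 ≤ t
      linarith
  rw [hr, hs]
  change rPos μ p q (phase μ k) ≠ _
  have hφ : (phase μ k).2 = true → μ (phase μ k).1 = 1 / 2 := phase_snd μ
  generalize phase μ k = φ at hφ ⊢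
  obtain ⟨j, _ | _⟩ := φ
  · exact roundPos_fst_ne_snd μ hpq j
  · show lineMap _ _ (μ j) ≠ _
    rw [Ne, lineMap_eq_right_iff, hφ rfl]
    norm_num [roundPos_fst_ne_snd μ hpq j]

end Runs

section Execution

variable {C : Type*} (μ : ℕ → ℝ) (γ : ℕ → C) (p q : Pt)

noncomputable def separatingExec : AsyncExec C :=
  AsyncExec.ofJumpRuns fun i => if i then sRun μ γ p q else rRun μ γ p q

theorem isLegal_separatingExec {c0 : C} {next : C → C} {lam : C → ℝ} (hγ₀ : γ 0 = c0)
    (hγ : ∀ j, γ (j + 1) = next (γ j)) (hμ : ∀ j, μ j = lam (γ j)) :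
    (separatingExec μ γ p q).IsLegal (fun _ _ _ c => next c)
      (fun _ p q c => p + lam c • (q - p)) (fun _ => c0) (fun i => if i then q else p)
      RigidReach := by
  refine AsyncExec.isLegal_ofJumpRuns (fun i => by cases i <;> rfl)
    (fun i => by cases i <;> exact hγ₀) (fun i k => ?_) (fun i k => ?_) <;>
    cases i <;>
    simp only [Bool.not_false, Bool.not_true, Bool.false_eq_true, ↓reduceIte,
      add_smul_sub_eq_lineMap]
  · exact rRun_col_succ μ γ p q hγ k
  · exact sRun_col_succ μ γ p q hγ k
  · rw [sRun_colAt_rRun_look, ← hμ]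
    exact rRun_pos_succ μ γ p q k
  · rw [rRun_colAt_sRun_look, ← hμ]
    exact sRun_pos_succ μ γ p q k

variable {p q} in
theorem separatingExec_pos_ne (hpq : p ≠ q) (t : ℝ) :
    (separatingExec μ γ p q).pos false t ≠ (separatingExec μ γ p q).pos true t :=
  rRun_posAt_ne_sRun_posAt μ γ hpq t

end Execution

end ClassL

/-- For every finite-communication algorithm of class 𝓛 — given by a color set
`C` of arbitrary cardinality, an initial color `c0`, and functions
`next : C → C` and `lam : C → ℝ`, prescribing that a robot at `p` whose
snapshot shows the other robot at `q` with color `c` sets its light to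
`next c` and moves to `p + lam c • (q - p)` — Rendezvous is unsolvable in
ASynch with rigid movements: there exist distinct initial positions and a
legal fair asynchronous execution under which the two robots never occupy the
same point. -/
theorem fcomm_class_L_unsolvable_asynch {C : Type*} (c0 : C)
    (next : C → C) (lam : C → ℝ) :
    ∃ (pr ps : Pt) (E : AsyncExec C), pr ≠ ps ∧
      E.IsLegal (fun _ _ _ c => next c) (fun _ p q c => p + lam c • (q - p))
        (fun _ => c0) (fun i => if i then ps else pr) RigidReach ∧
      ∀ t : ℝ, E.pos false t ≠ E.pos true t := by
  obtain ⟨pr, ps, hne⟩ := exists_pair_ne Pt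
  let γ : ℕ → C := fun j => next^[j] c0
  exact ⟨pr, ps, ClassL.separatingExec (fun j => lam (γ j)) γ pr ps, hne,
    ClassL.isLegal_separatingExec _ γ pr ps rfl (fun j => Function.iterate_succ_apply' next j c0)
      fun _ => rfl,
    ClassL.separatingExec_pos_ne _ γ hne⟩
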